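/- The elements α_k, k ≥ 1, generate the increasing monoid I: the submonoid of I generated by the set {α_k : k ≥ 1} is all of I. -/

import Mathlib

open scoped Classical

noncomputable section

/-- The increasing monoid `I`: the submonoid of `Function.End ℕ+` (functions under
composition) consisting of strictly increasing functions `σ : ℕ+ → ℕ+` such that
`σ n = n + ℓ` for some `ℓ` and all sufficiently large `n`. -/
def IncMonoid : Submonoid (Function.End ℕ+) where
  carrier := {f | StrictMono f ∧ ∃ (l : ℕ) (N : ℕ+), ∀ n : ℕ+, N ≤ n → ((f n : ℕ) = (n : ℕ) + l)}
  one_mem' := ⟨fun _ _ h => h, 0, 1, fun n _ => by show ((n : ℕ+) : ℕ) = (n : ℕ) + 0; omega⟩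
  mul_mem' := by
    rintro f g ⟨hf1, lf, Nf, hf2⟩ ⟨hg1, lg, Ng, hg2⟩
    refine ⟨hf1.comp hg1, lg + lf, max Nf Ng, fun n hn => ?_⟩
    have h1 : (g n : ℕ) = (n : ℕ) + lg := hg2 n (le_trans (le_max_right _ _) hn)
    have h2 : Nf ≤ g n := by
      rw [← PNat.coe_le_coe, h1]
      have : (Nf : ℕ) ≤ (n : ℕ) := (PNat.coe_le_coe _ _).2 (le_trans (le_max_left _ _) hn)
      omega
    have h3 := hf2 (g n) h2
    show ((f (g n) : ℕ)) = (n : ℕ) + (lg + lf)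
    omega

/-- The increasing monoid, as a type. -/
abbrev IncM : Type := IncMonoid

theorem IncM.strictMono (σ : IncM) : StrictMono σ.1 := σ.2.1

theorem IncM.le_apply (σ : IncM) (n : ℕ+) : n ≤ σ.1 n := by
  induction n using PNat.recOn with
  | one => exact (σ.1 1).one_le
  | succ n ih =>
      have h2 : σ.1 n < σ.1 (n + 1) := σ.strictMono (by rw [← PNat.coe_lt_coe]; push_cast; omega)
      rw [← PNat.coe_le_coe] at *
      rw [← PNat.coe_lt_coe] at h2
      push_cast at *
      omega

/-- The underlying function of the generator `α_k`. -/
def alphaFun (k : ℕ+) : Function.End ℕ+ := fun n => if n < k then n else n + 1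

theorem alphaFun_strictMono (k : ℕ+) : StrictMono (alphaFun k) := by
  intro a b hab
  unfold alphaFun
  split_ifs with h1 h2 <;>
    rw [← PNat.coe_lt_coe] at * <;> push_cast at * <;> omega

theorem alphaFun_mem (k : ℕ+) : alphaFun k ∈ IncMonoid := by
  refine ⟨alphaFun_strictMono k, 1, k, fun n hn => ?_⟩
  unfold alphaFun
  rw [if_neg (not_lt.2 hn)]
  push_cast
  ring

/-- The generator `α_k` of the increasing monoid (`k ≥ 1`). -/
def alpha (k : ℕ+) : IncM := ⟨alphaFun k, alphaFun_mem k⟩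

/-- The submonoid `I_{≥ n}` of `I` generated by the `α_i` with `i ≥ n`. -/
def Iges (n : ℕ+) : Submonoid IncM := Submonoid.closure (alpha '' Set.Ici n)

/-- The submonoid `I_{> n}` of `I` generated by the `α_i` with `i > n`. -/
def Igt (n : ℕ) : Submonoid IncM := Submonoid.closure {s | ∃ i : ℕ+, n < (i : ℕ) ∧ s = alpha i}

/-- The monoid algebra `k[I]` of the increasing monoid. -/
abbrev IncAlg (k : Type*) [Field k] : Type _ := MonoidAlgebra k IncM

/-- The image of `σ ∈ I` in the monoid algebra `k[I]`. -/
abbrev ofInc (k : Type*) [Field k] (σ : IncM) : IncAlg k := MonoidAlgebra.of k IncM σ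

/-- A `k[I]`-module is smooth if every vector is fixed by some `I_{>n}`. -/
def IsSmoothMod (k : Type*) [Field k] (M : Type*) [AddCommMonoid M]
    [Module (IncAlg k) M] : Prop :=
  ∀ x : M, ∃ n : ℕ, ∀ σ ∈ Igt n, ofInc k σ • x = x

/-! ### The principal modules `A^r` -/

/-- Index set for the basis of the principal module `A^r`:
strictly increasing `r`-tuples of positive integers. -/
def Idx (r : ℕ) : Type := {v : Fin r → ℕ+ // StrictMono v}

/-- The action of `σ ∈ I` on the index set of `A^r`. -/
def idxAct {r : ℕ} (σ : IncM) (t : Idx r) : Idx r :=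
  ⟨σ.1 ∘ t.1, (IncM.strictMono σ).comp t.2⟩

/-- The representation of the increasing monoid on the principal module `A^r`. -/
def prinRep (k : Type*) [Field k] (r : ℕ) : Representation k IncM (Idx r →₀ k) where
  toFun σ := Finsupp.lmapDomain k k (idxAct σ)
  map_one' := LinearMap.ext fun v => by
    have h : (idxAct (1 : IncM) : Idx r → Idx r) = id := funext fun t => rfl
    simp [Finsupp.lmapDomain_apply, h, Finsupp.mapDomain_id]
  map_mul' := fun σ τ => LinearMap.ext fun v => by
    have h : (idxAct (σ * τ) : Idx r → Idx r) = (idxAct σ) ∘ (idxAct τ) :=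
      funext fun t => rfl
    show Finsupp.lmapDomain k k (idxAct (σ * τ)) v =
      Finsupp.lmapDomain k k (idxAct σ) (Finsupp.lmapDomain k k (idxAct τ) v)
    simp [Finsupp.lmapDomain_apply, h, Finsupp.mapDomain_comp]

/-- The principal module `A^r`, as a module over the monoid algebra `k[I]`. -/
abbrev PrinMod (k : Type*) [Field k] (r : ℕ) : Type _ := (prinRep k r).asModule

/-- The basis vector `e_t` of the principal module `A^r`. -/
def ePrin (k : Type*) [Field k] {r : ℕ} (t : Idx r) : PrinMod k r :=
  (prinRep k r).asModuleEquiv.symm (Finsupp.single t 1)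

/-- The tuple `(1, 2, …, r)` indexing the canonical generator `e_{1,…,r}` of `A^r`. -/
def iotaIdx (r : ℕ) : Idx r :=
  ⟨fun i => ⟨(i : ℕ) + 1, Nat.succ_pos _⟩, fun a b h => by
    exact (PNat.coe_lt_coe ⟨(a : ℕ) + 1, Nat.succ_pos _⟩ ⟨(b : ℕ) + 1, Nat.succ_pos _⟩).1
      (Nat.succ_lt_succ h)⟩

/-! ### The simple modules `B^n` -/

/-- `σ ∈ I` fixes the natural number `n`, with the convention `σ 0 = 0`. -/
def fixesNat (σ : IncM) (n : ℕ) : Prop := ∀ h : 0 < n, σ.1 ⟨n, h⟩ = ⟨n, h⟩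

theorem fixesNat_mul (σ τ : IncM) (n : ℕ) :
    fixesNat (σ * τ) n ↔ fixesNat σ n ∧ fixesNat τ n := by
  rcases Nat.eq_zero_or_pos n with h0 | h0
  · subst h0
    constructor
    · exact fun _ => ⟨fun h => absurd h (lt_irrefl 0), fun h => absurd h (lt_irrefl 0)⟩
    · exact fun _ h => absurd h (lt_irrefl 0)
  · set p : ℕ+ := ⟨n, h0⟩
    have happ : ∀ h : 0 < n, (σ * τ).1 ⟨n, h⟩ = σ.1 (τ.1 ⟨n, h⟩) := fun _ => rfl
    constructor
    · intro h
      have hfix : σ.1 (τ.1 p) = p := h h0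
      have h1 : p ≤ τ.1 p := τ.le_apply p
      have h2 : τ.1 p ≤ σ.1 (τ.1 p) := σ.le_apply _
      have hτp : τ.1 p = p := le_antisymm (h2.trans_eq hfix) h1
      have hσp : σ.1 p = p := by rw [hτp] at hfix; exact hfix
      exact ⟨fun _ => hσp, fun _ => hτp⟩
    · rintro ⟨hσ, hτ⟩ h
      rw [happ h]
      have := hτ h0
      rw [this, hσ h0]

/-- The representation of the increasing monoid on the simple module `B^n`:
`σ` acts by the identity if `σ(n) = n` (with `σ(0) = 0`) and by `0` otherwise. -/
def bRep (k : Type*) [Field k] (n : ℕ) : Representation k IncM k where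
  toFun σ := if fixesNat σ n then 1 else 0
  map_one' := by
    try dsimp only
    rw [if_pos]
    intro h
    rfl
  map_mul' := fun σ τ => by
    try dsimp only
    by_cases hσ : fixesNat σ n
    · by_cases hτ : fixesNat τ n
      · rw [if_pos ((fixesNat_mul σ τ n).2 ⟨hσ, hτ⟩), if_pos hσ, if_pos hτ, one_mul]
      · rw [if_neg (fun h => hτ ((fixesNat_mul σ τ n).1 h).2), if_pos hσ, if_neg hτ, one_mul]
    · by_cases hτ : fixesNat τ n
      · rw [if_neg (fun h => hσ ((fixesNat_mul σ τ n).1 h).1), if_neg hσ, if_pos hτ, mul_one]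
      · rw [if_neg (fun h => hσ ((fixesNat_mul σ τ n).1 h).1), if_neg hσ, if_neg hτ, mul_zero]

/-- The simple module `B^n`, as a module over the monoid algebra `k[I]`. -/
abbrev BMod (k : Type*) [Field k] (n : ℕ) : Type _ := (bRep k n).asModule

/-!
Every `σ ∈ I` other than the identity misses some value `k`, and then `σ = α_k ∘ τ`, where `τ` is
`σ` followed by lowering the values above `k` by one; `τ ∈ I`, with eventual shift one less than
that of `σ`. Induction on the shift ends at shift `0`, where `σ` fixes all large `n`: since a point
moved by `σ` forces every larger point to be moved, `σ` is then the identity.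
-/

namespace IncM

theorem lt_apply_of_le {σ : IncM} {n m : ℕ+} (hn : n < σ.1 n) (hnm : n ≤ m) : m < σ.1 m := by
  induction m using PNat.recOn with
  | one => rwa [le_antisymm hnm one_le] at hn
  | succ m ih =>
    rcases hnm.eq_or_lt with rfl | hlt
    · exact hn
    · have hm : m < σ.1 m := ih (PNat.lt_add_one_iff.1 hlt)
      have hstep : σ.1 m < σ.1 (m + 1) := σ.strictMono (PNat.lt_add_one_iff.2 le_rfl)
      exact PNat.add_one_le_iff.2 hm |>.trans_lt hstep

theorem eq_one_of_forall_le_apply_eq {σ : IncM} {N : ℕ+} (h : ∀ n, N ≤ n → σ.1 n = n) :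
    σ = 1 := by
  refine Subtype.ext (funext fun n => (σ.le_apply n).antisymm' (not_lt.1 fun hn => ?_))
  have hfix := h (max N n) le_sup_left
  exact (lt_apply_of_le hn le_sup_right).ne' hfix

/-- The least point moved by `σ` is not a value of `σ`. -/
theorem exists_notMem_range {σ : IncM} (hσ : σ ≠ 1) : ∃ k, k ∉ Set.range σ.1 := by
  have hex : ∃ n, σ.1 n ≠ n := by
    by_contra! h
    exact hσ (eq_one_of_forall_le_apply_eq (N := 1) fun n _ => h n)
  refine ⟨PNat.find hex, ?_⟩
  rintro ⟨n, hn⟩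
  rcases lt_or_ge n (PNat.find hex) with hlt | hle
  · exact hlt.ne' (by simpa [hn] using not_not.1 (PNat.find_min hex hlt))
  · have hk : PNat.find hex < σ.1 (PNat.find hex) :=
      (σ.le_apply _).lt_of_ne (PNat.find_spec hex).symm
    exact (hle.trans_lt (lt_apply_of_le hk hle)).ne' hn

def IsEventuallyShift (σ : IncM) (ℓ : ℕ) : Prop :=
  ∃ N : ℕ+, ∀ n, N ≤ n → (σ.1 n : ℕ) = n + ℓ

theorem exists_isEventuallyShift (σ : IncM) : ∃ ℓ, σ.IsEventuallyShift ℓ := σ.2.2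

end IncM

def lowerAt (k m : ℕ+) : ℕ+ := if m ≤ k then m else m - 1

theorem lowerAt_of_le {k m : ℕ+} (h : m ≤ k) : lowerAt k m = m := if_pos h

theorem coe_lowerAt_of_lt {k m : ℕ+} (h : k < m) : (lowerAt k m : ℕ) = m - 1 := by
  rw [lowerAt, if_neg (not_le.2 h), PNat.sub_coe, if_pos (one_lt_of_gt h), PNat.one_coe]

theorem lowerAt_strictMonoOn (k : ℕ+) : StrictMonoOn (lowerAt k) {k}ᶜ := by
  intro a ha b hb hab
  have ha' : (a : ℕ) ≠ k := PNat.coe_injective.ne ha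
  rw [← PNat.coe_lt_coe] at hab ⊢
  rcases le_or_gt a k with hak | hka <;> rcases le_or_gt b k with hbk | hkb
  · rwa [lowerAt_of_le hak, lowerAt_of_le hbk]
  · rw [lowerAt_of_le hak, coe_lowerAt_of_lt hkb]
    have := PNat.coe_le_coe _ _ |>.2 hak
    have := PNat.coe_lt_coe _ _ |>.2 hkb
    omega
  · exact absurd (hbk.trans_lt hka) (not_lt.2 hab.le)
  · rw [coe_lowerAt_of_lt hka, coe_lowerAt_of_lt hkb]
    have := PNat.coe_lt_coe _ _ |>.2 hka
    omega

theorem alphaFun_lowerAt {k m : ℕ+} (h : m ≠ k) : alphaFun k (lowerAt k m) = m := by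
  rcases h.lt_or_gt with hmk | hkm
  · rw [lowerAt_of_le hmk.le, alphaFun, if_pos hmk]
  · have hlow := coe_lowerAt_of_lt hkm
    rw [← PNat.coe_lt_coe] at hkm
    rw [alphaFun, if_neg (by rw [← PNat.coe_lt_coe, hlow]; omega)]
    apply PNat.coe_injective
    rw [PNat.add_coe, hlow, PNat.one_coe]
    omega

theorem IncM.exists_eq_alpha_mul {σ : IncM} {ℓ : ℕ} (hσ : σ.IsEventuallyShift (ℓ + 1)) :
    ∃ k, ∃ τ : IncM, τ.IsEventuallyShift ℓ ∧ σ = alpha k * τ := by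
  obtain ⟨N, hN⟩ := hσ
  have hσ1 : σ ≠ 1 := by
    rintro rfl
    have h1N : ((1 : IncM).1 N : ℕ) = N := rfl
    have := hN N le_rfl
    omega
  obtain ⟨k, hk⟩ := σ.exists_notMem_range hσ1
  have hne : ∀ n, σ.1 n ≠ k := fun n h => hk ⟨n, h⟩
  have hmono : StrictMono (fun n => lowerAt k (σ.1 n)) := fun a b hab =>
    lowerAt_strictMonoOn k (hne a) (hne b) (σ.strictMono hab)
  have hshift : ∀ n, max N k ≤ n → (lowerAt k (σ.1 n) : ℕ) = n + ℓ := by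
    intro n hn
    have hσn := hN n (le_of_max_le_left hn)
    have hkn : k < σ.1 n := by
      rw [← PNat.coe_lt_coe, hσn]
      have := PNat.coe_le_coe _ _ |>.2 (le_of_max_le_right hn)
      omega
    rw [coe_lowerAt_of_lt hkn, hσn]
    omega
  refine ⟨k, ⟨fun n => lowerAt k (σ.1 n), hmono, ℓ, max N k, hshift⟩, ⟨max N k, hshift⟩, ?_⟩
  exact Subtype.ext (funext fun n => (alphaFun_lowerAt (hne n)).symm)

theorem mem_closure_range_alpha_of_isEventuallyShift {σ : IncM} {ℓ : ℕ}
    (hσ : σ.IsEventuallyShift ℓ) : σ ∈ Submonoid.closure (Set.range alpha) := by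
  induction ℓ generalizing σ with
  | zero =>
    obtain ⟨N, hN⟩ := hσ
    rw [IncM.eq_one_of_forall_le_apply_eq fun n hn => PNat.coe_injective (hN n hn)]
    exact one_mem _
  | succ ℓ ih =>
    obtain ⟨k, τ, hτ, rfl⟩ := σ.exists_eq_alpha_mul hσ
    exact mul_mem (Submonoid.subset_closure ⟨k, rfl⟩) (ih hτ)

/-- The `α_k`, `k ≥ 1`, generate the increasing monoid. -/
theorem alpha_generates_increasing_monoid :
    Submonoid.closure (Set.range alpha) = (⊤ : Submonoid IncM) := by
  rw [eq_top_iff]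
  rintro σ -
  obtain ⟨ℓ, hσ⟩ := σ.exists_isEventuallyShift
  exact mem_closure_range_alpha_of_isEventuallyShift hσ

end
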